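/- Löwenheim–Skolem theorem in Herbrand's formulation: A first-order formula A is valid if and only if there is a positive natural number n such that A has Property C of order n. -/

import Mathlib

namespace Herbrand

abbrev FSym := Option (ℕ ⊕ ℕ)

inductive Tm : Type where
  | var : ℕ → Tm
  | fn : FSym → List Tm → Tm

inductive Fm : Type where
  | atom : ℕ → List Tm → Fm
  | neg : Fm → Fm
  | or : Fm → Fm → Fm
  | and : Fm → Fm → Fm
  | all : ℕ → Fm → Fm
  | ex : ℕ → Fm → Fm

mutual
  def Tm.beq : Tm → Tm → Bool
    | .var x, .var y => x == y
    | .fn f ts, .fn g us => f == g && Tm.beqList ts us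
    | _, _ => false
  def Tm.beqList : List Tm → List Tm → Bool
    | [], [] => true
    | t :: ts, u :: us => Tm.beq t u && Tm.beqList ts us
    | _, _ => false
end

def Tm.height : Tm → ℕ
  | .var _ => 1
  | .fn _ ts => 1 + ts.attach.foldr (fun ⟨t, _⟩ m => max (Tm.height t) m) 0

def Tm.varsT : Tm → List ℕ
  | .var x => [x]
  | .fn _ ts => ts.attach.foldr (fun ⟨t, _⟩ l => Tm.varsT t ++ l) []

def Tm.symsT : Tm → List (FSym × ℕ)
  | .var _ => []
  | .fn f ts => (f, ts.length) :: ts.attach.foldr (fun ⟨t, _⟩ l => Tm.symsT t ++ l) []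

def Tm.substT (x : ℕ) (u : Tm) : Tm → Tm
  | .var y => if y = x then u else .var y
  | .fn f ts => .fn f (ts.attach.map fun ⟨t, _⟩ => Tm.substT x u t)

/-- A term is over the base language: no Skolem symbols, no bullet. -/
def Tm.isBaseT (t : Tm) : Prop := ∀ p ∈ t.symsT, ∃ k : ℕ, p.1 = some (Sum.inl k)

def Fm.freeVars : Fm → List ℕ
  | .atom _ ts => ts.flatMap Tm.varsT
  | .neg A => A.freeVars
  | .or A B => A.freeVars ++ B.freeVars
  | .and A B => A.freeVars ++ B.freeVars
  | .all x A => A.freeVars.filter (· ≠ x)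
  | .ex x A => A.freeVars.filter (· ≠ x)

def Fm.boundVars : Fm → List ℕ
  | .atom _ _ => []
  | .neg A => A.boundVars
  | .or A B => A.boundVars ++ B.boundVars
  | .and A B => A.boundVars ++ B.boundVars
  | .all x A => x :: A.boundVars
  | .ex x A => x :: A.boundVars

def Fm.symsF : Fm → List (FSym × ℕ)
  | .atom _ ts => ts.flatMap Tm.symsT
  | .neg A => A.symsF
  | .or A B => A.symsF ++ B.symsF
  | .and A B => A.symsF ++ B.symsF
  | .all _ A => A.symsF
  | .ex _ A => A.symsF

/-- Naive substitution of the term `u` for the free occurrences of the variable `x`. -/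
def Fm.subst (x : ℕ) (u : Tm) : Fm → Fm
  | .atom p ts => .atom p (ts.map (Tm.substT x u))
  | .neg A => .neg (Fm.subst x u A)
  | .or A B => .or (Fm.subst x u A) (Fm.subst x u B)
  | .and A B => .and (Fm.subst x u A) (Fm.subst x u B)
  | .all y A => if y = x then .all y A else .all y (Fm.subst x u A)
  | .ex y A => if y = x then .ex y A else .ex y (Fm.subst x u A)

/-- Quantifier-freeness. -/
def Fm.qf : Fm → Prop
  | .atom _ _ => True
  | .neg A => A.qf
  | .or A B => A.qf ∧ B.qf
  | .and A B => A.qf ∧ B.qf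
  | .all _ _ => False
  | .ex _ _ => False

def Fm.qfB : Fm → Bool
  | .atom _ _ => true
  | .neg A => A.qfB
  | .or A B => A.qfB && B.qfB
  | .and A B => A.qfB && B.qfB
  | .all _ _ => false
  | .ex _ _ => false

/-- A formula is over the base language. -/
def Fm.isBase (A : Fm) : Prop := ∀ p ∈ A.symsF, ∃ k : ℕ, p.1 = some (Sum.inl k)

/-- Rectified: distinct binders, and bound variables distinct from free variables
(the tacit assumption of the paper: every occurrence of every variable is either
free or bound by a unique quantifier). -/
def Fm.rectified (A : Fm) : Prop :=
  A.boundVars.Nodup ∧ ∀ x ∈ A.boundVars, x ∉ A.freeVars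

/-- Sentential (Boolean) evaluation, reading each atomic formula (a predicate symbol
together with its argument terms) as a propositional variable. -/
def Fm.sentEval (β : ℕ → List Tm → Bool) : Fm → Bool
  | .atom p ts => β p ts
  | .neg A => !(A.sentEval β)
  | .or A B => A.sentEval β || B.sentEval β
  | .and A B => A.sentEval β && B.sentEval β
  | .all _ _ => false
  | .ex _ _ => false

/-- A sentential tautology: a quantifier-free formula that evaluates to true under
every Boolean valuation of its atoms. -/
def Fm.taut (A : Fm) : Prop := A.qf ∧ ∀ β : ℕ → List Tm → Bool, A.sentEval β = true

/-- An interpretation of the language on a domain `D`. -/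
structure Interp (D : Type) where
  fns : FSym → List D → D
  prd : ℕ → List D → Prop

def Tm.eval {D : Type} (I : Interp D) (v : ℕ → D) : Tm → D
  | .var x => v x
  | .fn f ts => I.fns f (ts.attach.map fun ⟨t, _⟩ => Tm.eval I v t)

def Fm.holds {D : Type} (I : Interp D) (v : ℕ → D) : Fm → Prop
  | .atom p ts => I.prd p (ts.map (Tm.eval I v))
  | .neg A => ¬ Fm.holds I v A
  | .or A B => Fm.holds I v A ∨ Fm.holds I v B
  | .and A B => Fm.holds I v A ∧ Fm.holds I v B
  | .all x A => ∀ d : D, Fm.holds I (Function.update v x d) A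
  | .ex x A => ∃ d : D, Fm.holds I (Function.update v x d) A

/-- Validity: truth in every structure (nonempty domain) under every assignment. -/
def Fm.valid (A : Fm) : Prop :=
  ∀ (D : Type) (_ : Nonempty D) (I : Interp D) (v : ℕ → D), A.holds I v


/-- Alpha-equivalence: equality of formulas up to renaming of bound variables. -/
inductive Alpha : Fm → Fm → Prop where
  | refl (A : Fm) : Alpha A A
  | symm {A B : Fm} : Alpha A B → Alpha B A
  | trans {A B C : Fm} : Alpha A B → Alpha B C → Alpha A C
  | negc {A B : Fm} : Alpha A B → Alpha (.neg A) (.neg B)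
  | orc {A A' B B' : Fm} : Alpha A A' → Alpha B B' → Alpha (.or A B) (.or A' B')
  | andc {A A' B B' : Fm} : Alpha A A' → Alpha B B' → Alpha (.and A B) (.and A' B')
  | allc {A B : Fm} (x : ℕ) : Alpha A B → Alpha (.all x A) (.all x B)
  | exc {A B : Fm} (x : ℕ) : Alpha A B → Alpha (.ex x A) (.ex x B)
  | allRename (x y : ℕ) (A : Fm) : y ∉ A.freeVars → y ∉ A.boundVars →
      Alpha (.all x A) (.all y (Fm.subst x (.var y) A))
  | exRename (x y : ℕ) (A : Fm) : y ∉ A.freeVars → y ∉ A.boundVars →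
      Alpha (.ex x A) (.ex y (Fm.subst x (.var y) A))

/-- One-hole contexts `A[…]` in formulas. -/
inductive Ctx : Type where
  | hole : Ctx
  | negC : Ctx → Ctx
  | orL : Ctx → Fm → Ctx
  | orR : Fm → Ctx → Ctx
  | andL : Ctx → Fm → Ctx
  | andR : Fm → Ctx → Ctx
  | allC : ℕ → Ctx → Ctx
  | exC : ℕ → Ctx → Ctx

def Ctx.fill : Ctx → Fm → Fm
  | .hole, H => H
  | .negC c, H => .neg (c.fill H)
  | .orL c B, H => .or (c.fill H) B
  | .orR B c, H => .or B (c.fill H)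
  | .andL c B, H => .and (c.fill H) B
  | .andR B c, H => .and B (c.fill H)
  | .allC x c, H => .all x (c.fill H)
  | .exC x c, H => .ex x (c.fill H)

/-- `true` iff the hole is in the scope of an even number of negation symbols. -/
def Ctx.pol : Ctx → Bool
  | .hole => true
  | .negC c => !c.pol
  | .orL c _ => c.pol
  | .orR _ c => c.pol
  | .andL c _ => c.pol
  | .andR _ c => c.pol
  | .allC _ c => c.pol
  | .exC _ c => c.pol

/-- The hole is accessible: not in the scope of any quantifier. -/
def Ctx.accessible : Ctx → Prop
  | .hole => True
  | .negC c => c.accessible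
  | .orL c _ => c.accessible
  | .orR _ c => c.accessible
  | .andL c _ => c.accessible
  | .andR _ c => c.accessible
  | .allC _ _ => False
  | .exC _ _ => False

/-- Variables occurring free in the context (the hole contributing nothing). -/
def Ctx.freeVarsC : Ctx → List ℕ
  | .hole => []
  | .negC c => c.freeVarsC
  | .orL c B => c.freeVarsC ++ B.freeVars
  | .orR B c => B.freeVars ++ c.freeVarsC
  | .andL c B => c.freeVarsC ++ B.freeVars
  | .andR B c => B.freeVars ++ c.freeVarsC
  | .allC x c => c.freeVarsC.filter (· ≠ x)
  | .exC x c => c.freeVarsC.filter (· ≠ x)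

/-- `mkQ q x H` is `∃x.H` if `q = true`, and `∀x.H` if `q = false`.
A quantifier `mkQ q x` sitting in a context `c` is existentialoid iff `q = c.pol`
(i.e. `∃` under an even number of negations or `∀` under an odd number),
and universaloid iff `q = !c.pol`. -/
def mkQ (q : Bool) (x : ℕ) (H : Fm) : Fm := if q then .ex x H else .all x H

/-- Derivations in the modern version of Herbrand's modus-ponens-free calculus,
from a start formula, recording the list of instance terms `t` used by the
applications of the generalized rule of γ-quantification. -/
inductive Deriv : Fm → Fm → List Tm → Prop where
  | refl (A : Fm) : Deriv A A []
  | gamma {B : Fm} {ts : List Tm} (c : Ctx) (q : Bool) (x : ℕ) (t : Tm) (H : Fm) :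
      Deriv B (c.fill (Fm.subst x t H)) ts →
      c.accessible → q = c.pol → (∀ z ∈ t.varsT, z ∉ H.boundVars) →
      Deriv B (c.fill (mkQ q x H)) (ts ++ [t])
  | delta {B : Fm} {ts : List Tm} (c : Ctx) (q : Bool) (y : ℕ) (H : Fm) :
      Deriv B (c.fill H) ts →
      c.accessible → q = !c.pol → y ∉ c.freeVarsC →
      Deriv B (c.fill (mkQ q y H)) ts
  | simp {B : Fm} {ts : List Tm} (c : Ctx) (H H' : Fm) :
      Deriv B (c.fill (if c.pol then Fm.or H H' else Fm.and H H')) ts →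
      Alpha H H' →
      Deriv B (c.fill H) ts
  | alpha {B A A' : Fm} {ts : List Tm} : Deriv B A ts → Alpha A A' → Deriv B A' ts

/-- A single application of a generalized rule of γ- or δ-quantification. -/
inductive QStep : Fm → Fm → Prop where
  | gamma (c : Ctx) (q : Bool) (x : ℕ) (t : Tm) (H : Fm) :
      c.accessible → q = c.pol → (∀ z ∈ t.varsT, z ∉ H.boundVars) →
      QStep (c.fill (Fm.subst x t H)) (c.fill (mkQ q x H))
  | delta (c : Ctx) (q : Bool) (y : ℕ) (H : Fm) :
      c.accessible → q = !c.pol → y ∉ c.freeVarsC →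
      QStep (c.fill H) (c.fill (mkQ q y H))

/-- A single application of the generalized rule of γ-simplification:
simplification where `H` is of the form `Qy.C` with `Qy.` existentialoid. -/
inductive GSimpStep : Fm → Fm → Prop where
  | mk (c : Ctx) (y : ℕ) (C H' : Fm) :
      Alpha (mkQ c.pol y C) H' →
      GSimpStep
        (c.fill (if c.pol then Fm.or (mkQ c.pol y C) H' else Fm.and (mkQ c.pol y C) H'))
        (c.fill (mkQ c.pol y C))


/-- The Skolem term `x*(y₁,…,yₘ)` for the removed universaloid variable `x`,
whose arguments are the variables of the existentialoid quantifiers in scope. -/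
def skTm (x : ℕ) (γs : List ℕ) : Tm := .fn (some (Sum.inr x)) (γs.map Tm.var)

/-- Outer Skolemization: `b` is the polarity (`true` = an even number of negations
so far), `γs` the list of variables of the existentialoid quantifiers in whose
scope we are, in order. Universaloid quantifiers are removed and their variables
replaced by Skolem terms; existentialoid quantifiers are kept. -/
def Fm.skolemize (b : Bool) (γs : List ℕ) : Fm → Fm
  | .atom p ts => .atom p ts
  | .neg A => .neg (A.skolemize (!b) γs)
  | .or A B => .or (A.skolemize b γs) (B.skolemize b γs)
  | .and A B => .and (A.skolemize b γs) (B.skolemize b γs)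
  | .all x A => if b then Fm.subst x (skTm x γs) (A.skolemize b γs)
                else .all x (A.skolemize b (γs ++ [x]))
  | .ex x A => if b then .ex x (A.skolemize b (γs ++ [x]))
               else Fm.subst x (skTm x γs) (A.skolemize b γs)

/-- The outer Skolemized form of a formula. -/
def Fm.outerSk (A : Fm) : Fm := A.skolemize true []

def falsum : Fm := .and (.atom 0 []) (.neg (.atom 0 []))
def verum : Fm := .or (.atom 0 []) (.neg (.atom 0 []))

def bigOr : List Fm → Fm
  | [] => falsum
  | [A] => A
  | A :: B :: rest => .or A (bigOr (B :: rest))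

def bigAnd : List Fm → Fm
  | [] => verum
  | [A] => A
  | A :: B :: rest => .and A (bigAnd (B :: rest))

/-- All lists of length `k` over the given list. -/
def tuples : ℕ → List Tm → List (List Tm)
  | 0, _ => [[]]
  | k + 1, l => l.flatMap fun a => (tuples k l).map (a :: ·)

/-- The fresh constant `•` is included iff `F` contains neither constants
nor free variables. -/
def Fm.allowBullet (F : Fm) : Bool :=
  F.freeVars.isEmpty && F.symsF.all (fun p => p.2 != 0)

/-- The champ fini `T_n(F)`: all terms of height `< n` built from the function
symbols (with their arities), constant symbols, and free variables of `F`
(with the fresh constant `•` added if `F` has neither constants nor free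
variables).  `T_1(F) = ∅`. -/
def Fm.champTm (F : Fm) : ℕ → List Tm
  | 0 => []
  | 1 => []
  | n + 2 =>
      F.freeVars.map Tm.var
        ++ (if F.allowBullet then [Tm.fn none []] else [])
        ++ F.symsF.flatMap (fun p => (tuples p.2 (F.champTm (n + 1))).map (Tm.fn p.1))

/-- The expansion `A^T` of `A` w.r.t. a finite set (list) of terms `T`. -/
def Fm.expandL (T : List Tm) : Fm → Fm
  | .atom p ts => .atom p ts
  | .neg A => .neg (A.expandL T)
  | .or A B => .or (A.expandL T) (B.expandL T)
  | .and A B => .and (A.expandL T) (B.expandL T)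
  | .ex x A => bigOr (T.map fun t => Fm.subst x t (A.expandL T))
  | .all x A => bigAnd (T.map fun t => Fm.subst x t (A.expandL T))

/-- Property C of order `n` (for `n ≥ 1`): letting `F` be the outer Skolemized
form of `A`, for `n = 1` the formula `F` itself must be a sentential tautology,
and for `n > 1` the expansion `F^{T_n(F)}` must be a sentential tautology. -/
def Fm.hasC (A : Fm) (n : ℕ) : Prop :=
  (if n = 1 then A.outerSk else Fm.expandL (A.outerSk.champTm n) A.outerSk).taut


/-- Reading every term that starts with a Skolem function symbol as an atomic
variable, via an injective coding `code` of terms into variable names. -/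
def Tm.readSk (code : Tm → ℕ) : Tm → Tm
  | .var x => .var x
  | .fn (some (Sum.inr k)) ts => .var (code (.fn (some (Sum.inr k)) ts))
  | .fn (some (Sum.inl k)) ts => .fn (some (Sum.inl k)) (ts.attach.map fun ⟨t, _⟩ => Tm.readSk code t)
  | .fn none ts => .fn none (ts.attach.map fun ⟨t, _⟩ => Tm.readSk code t)

def Fm.readSk (code : Tm → ℕ) : Fm → Fm
  | .atom p ts => .atom p (ts.map (Tm.readSk code))
  | .neg A => .neg (A.readSk code)
  | .or A B => .or (A.readSk code) (B.readSk code)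
  | .and A B => .and (A.readSk code) (B.readSk code)
  | .all x A => .all x (A.readSk code)
  | .ex x A => .ex x (A.readSk code)

/-- The atoms (predicate symbol with argument terms) occurring in a formula. -/
def Fm.atoms : Fm → List (ℕ × List Tm)
  | .atom p ts => [(p, ts)]
  | .neg A => A.atoms
  | .or A B => A.atoms ++ B.atoms
  | .and A B => A.atoms ++ B.atoms
  | .all _ A => A.atoms
  | .ex _ A => A.atoms

/-- All Boolean valuations of a finite list of atoms (all other atoms `false`). -/
def valuations : List (ℕ × List Tm) → List (ℕ → List Tm → Bool)
  | [] => [fun _ _ => false]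
  | a :: rest =>
      (valuations rest).flatMap fun β =>
        [fun p ts => if p == a.1 && Tm.beqList ts a.2 then true else β p ts,
         fun p ts => if p == a.1 && Tm.beqList ts a.2 then false else β p ts]

/-- Computable check for sentential tautology. -/
def Fm.tautB (A : Fm) : Bool :=
  A.qfB && (valuations A.atoms).all fun β => A.sentEval β

/-- Computable check for Property C of order `n`. -/
def Fm.hasCB (A : Fm) (n : ℕ) : Bool :=
  (if n = 1 then A.outerSk else Fm.expandL (A.outerSk.champTm n) A.outerSk).tautB

/-- The six rules of passage, read from left to right. -/
inductive PassEq : Fm → Fm → Prop where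
  | p1 (x : ℕ) (A : Fm) : PassEq (.neg (.all x A)) (.ex x (.neg A))
  | p2 (x : ℕ) (A : Fm) : PassEq (.neg (.ex x A)) (.all x (.neg A))
  | p3 (x : ℕ) (A B : Fm) : x ∉ B.freeVars → PassEq (.or (.all x A) B) (.all x (.or A B))
  | p4 (x : ℕ) (A B : Fm) : x ∉ B.freeVars → PassEq (.or B (.all x A)) (.all x (.or B A))
  | p5 (x : ℕ) (A B : Fm) : x ∉ B.freeVars → PassEq (.or (.ex x A) B) (.ex x (.or A B))
  | p6 (x : ℕ) (A B : Fm) : x ∉ B.freeVars → PassEq (.or B (.ex x A)) (.ex x (.or B A))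

/-- A single inference step of Herbrand's historic modus-ponens-free calculus:
the shallow rules of γ- and δ-quantification (empty context), the generalized
(deep) rule of simplification, the twelve (deep) rules of passage, and renaming
of bound variables. -/
inductive HStep : Fm → Fm → Prop where
  | gammaSh (x : ℕ) (t : Tm) (H : Fm) :
      (∀ z ∈ t.varsT, z ∉ H.boundVars) →
      HStep (Fm.subst x t H) (.ex x H)
  | deltaSh (y : ℕ) (H : Fm) :
      HStep H (.all y H)
  | simp (c : Ctx) (H H' : Fm) :
      Alpha H H' →
      HStep (c.fill (if c.pol then Fm.or H H' else Fm.and H H')) (c.fill H)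
  | passage (c : Ctx) (L R : Fm) : PassEq L R → HStep (c.fill L) (c.fill R)
  | passageRev (c : Ctx) (L R : Fm) : PassEq L R → HStep (c.fill R) (c.fill L)
  | alpha (A B : Fm) : Alpha A B → HStep A B

/-!
Property C implies validity: a sentential tautology holds in every structure, the expansion
`F^T` implies the outer Skolemized form `F`, and a structure falsifying `A` falsifies `F` once
each Skolem symbol is read as a choice function picking counterexamples to its universaloid
quantifier.

Validity implies Property C: if no expansion `F^{T_n(F)}` is a sentential tautology, compactness
of the space of valuations gives one valuation `β` falsifying all of them. Read as a structure on
the Herbrand universe of `F`, `β` falsifies `F`, since there `F` holds iff its expansions over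
the champs finis eventually hold; hence it falsifies `A`.
-/

open Filter

@[induction_eliminator]
theorem Tm.ind {P : Tm → Prop} (var : ∀ x, P (.var x))
    (fn : ∀ f ts, (∀ t ∈ ts, P t) → P (.fn f ts)) : ∀ t, P t := by
  intro t
  induction t using Tm.rec (motive_2 := fun l => ∀ t ∈ l, P t) with
  | var x => exact var x
  | fn f ts ih => exact fn f ts ih
  | nil => simp_all
  | cons t ts ih ihs =>
    rename_i s hs
    rcases List.mem_cons.1 hs with rfl | hs
    exacts [ih, ihs s hs]

theorem Tm.height_fn (f : FSym) (ts : List Tm) :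
    (Tm.fn f ts).height = 1 + ts.foldr (fun t m => max (Tm.height t) m) 0 := by
  rw [Tm.height]; congr 1; exact List.foldr_attach (f := fun t m => max (Tm.height t) m)

theorem Tm.height_pos (t : Tm) : 0 < t.height := by
  cases t <;> simp [Tm.height]

theorem Tm.height_fn_lt_iff {f : FSym} {ts : List Tm} {n : ℕ} :
    (Tm.fn f ts).height < n + 2 ↔ ∀ t ∈ ts, t.height < n + 1 := by
  rw [Tm.height_fn, add_comm, Nat.add_lt_add_iff_right]
  induction ts <;> simp_all

@[simp] theorem Tm.varsT_var (x : ℕ) : (Tm.var x).varsT = [x] := by simp [Tm.varsT]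

@[simp] theorem Tm.varsT_fn (f : FSym) (ts : List Tm) :
    (Tm.fn f ts).varsT = ts.flatMap Tm.varsT := by
  rw [Tm.varsT, List.foldr_attach (f := fun t l => Tm.varsT t ++ l)]
  induction ts <;> simp_all

@[simp] theorem Tm.symsT_var (x : ℕ) : (Tm.var x).symsT = [] := by simp [Tm.symsT]

@[simp] theorem Tm.symsT_fn (f : FSym) (ts : List Tm) :
    (Tm.fn f ts).symsT = (f, ts.length) :: ts.flatMap Tm.symsT := by
  rw [Tm.symsT, List.foldr_attach (f := fun t l => Tm.symsT t ++ l)]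
  induction ts <;> simp_all

@[simp] theorem Tm.substT_var (x : ℕ) (u : Tm) (y : ℕ) :
    Tm.substT x u (.var y) = if y = x then u else .var y := by rw [Tm.substT]

@[simp] theorem Tm.substT_fn (x : ℕ) (u : Tm) (f : FSym) (ts : List Tm) :
    Tm.substT x u (.fn f ts) = .fn f (ts.map (Tm.substT x u)) := by
  rw [Tm.substT, List.map_attach_eq_pmap]; simp

section Eval

variable {D : Type} (I : Interp D) (v : ℕ → D)

@[simp] theorem Tm.eval_var (x : ℕ) : Tm.eval I v (.var x) = v x := by rw [Tm.eval]

@[simp] theorem Tm.eval_fn (f : FSym) (ts : List Tm) :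
    Tm.eval I v (.fn f ts) = I.fns f (ts.map (Tm.eval I v)) := by
  rw [Tm.eval]; simp

variable {I v}

theorem Tm.eval_congr {w : ℕ → D} {t : Tm} (h : ∀ z ∈ t.varsT, v z = w z) :
    Tm.eval I v t = Tm.eval I w t := by
  induction t with
  | var x => simpa using h
  | fn f ts ih =>
    simp only [Tm.eval_fn]
    congr 1
    exact List.map_congr_left fun t ht => ih t ht fun z hz => h z (by simpa using ⟨t, ht, hz⟩)

theorem Tm.eval_substT (x : ℕ) (u t : Tm) :
    Tm.eval I v (Tm.substT x u t) = Tm.eval I (Function.update v x (Tm.eval I v u)) t := by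
  induction t with
  | var y => by_cases h : y = x <;> simp [h]
  | fn f ts ih =>
    simp only [Tm.substT_fn, Tm.eval_fn, List.map_map]
    exact congrArg _ (List.map_congr_left ih)

end Eval

theorem Tm.mem_varsT_substT {x z : ℕ} {u t : Tm} (hz : z ∈ (Tm.substT x u t).varsT) :
    (z ∈ t.varsT ∧ z ≠ x) ∨ z ∈ u.varsT := by
  induction t with
  | var y => by_cases h : y = x <;> simp_all
  | fn f ts ih =>
    simp only [Tm.substT_fn, Tm.varsT_fn, List.mem_flatMap, List.mem_map] at hz
    obtain ⟨_, ⟨t, ht, rfl⟩, hz⟩ := hz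
    simpa using (ih t ht hz).imp_left fun h => ⟨⟨t, ht, h.1⟩, h.2⟩

theorem Tm.mem_symsT_substT {x : ℕ} {p : FSym × ℕ} {u t : Tm}
    (hp : p ∈ (Tm.substT x u t).symsT) : p ∈ t.symsT ∨ p ∈ u.symsT := by
  induction t with
  | var y => by_cases h : y = x <;> simp_all
  | fn f ts ih =>
    simp only [Tm.substT_fn, Tm.symsT_fn, List.mem_cons, List.mem_flatMap, List.mem_map,
      List.length_map] at hp
    rcases hp with rfl | ⟨_, ⟨t, ht, rfl⟩, hp⟩
    · simp
    · simpa using (ih t ht hp).imp_left fun h => Or.inr ⟨t, ht, h⟩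

def PolImp : Bool → Prop → Prop → Prop
  | true, P, Q => P → Q
  | false, P, Q => Q → P

theorem PolImp.not {b : Bool} {P Q : Prop} (h : PolImp (!b) P Q) : PolImp b (¬P) (¬Q) := by
  cases b <;> exact mt h

theorem PolImp.or {b : Bool} {P Q P' Q' : Prop} (h : PolImp b P Q) (h' : PolImp b P' Q') :
    PolImp b (P ∨ P') (Q ∨ Q') := by
  cases b <;> exact Or.imp h h'

theorem PolImp.and {b : Bool} {P Q P' Q' : Prop} (h : PolImp b P Q) (h' : PolImp b P' Q') :
    PolImp b (P ∧ P') (Q ∧ Q') := by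
  cases b <;> exact And.imp h h'

section Holds

variable {D : Type} {I : Interp D}

theorem Fm.holds_congr {C : Fm} {v w : ℕ → D} (h : ∀ z ∈ C.freeVars, v z = w z) :
    C.holds I v ↔ C.holds I w := by
  induction C generalizing v w with
  | atom p ts =>
    simp only [Fm.holds]
    rw [List.map_congr_left fun t ht => Tm.eval_congr fun z hz =>
      h z (by simpa [Fm.freeVars] using ⟨t, ht, hz⟩)]
  | neg A ih => exact not_congr (ih h)
  | or A B ihA ihB =>
    exact or_congr (ihA fun z hz => h z (by simp [Fm.freeVars, hz]))
      (ihB fun z hz => h z (by simp [Fm.freeVars, hz]))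
  | and A B ihA ihB =>
    exact and_congr (ihA fun z hz => h z (by simp [Fm.freeVars, hz]))
      (ihB fun z hz => h z (by simp [Fm.freeVars, hz]))
  | all x A ih =>
    refine forall_congr' fun d => ih fun z hz => ?_
    by_cases hzx : z = x
    · simp [hzx]
    · simpa [hzx] using h z (by simp [Fm.freeVars, hz, hzx])
  | ex x A ih =>
    refine exists_congr fun d => ih fun z hz => ?_
    by_cases hzx : z = x
    · simp [hzx]
    · simpa [hzx] using h z (by simp [Fm.freeVars, hz, hzx])

theorem Fm.holds_update_congr {A : Fm} {x : ℕ} {w u : ℕ → D}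
    (h : ∀ z ∈ A.freeVars.filter (· ≠ x), w z = u z) (d : D) :
    A.holds I (Function.update w x d) ↔ A.holds I (Function.update u x d) :=
  Fm.holds_congr fun z hz => by
    by_cases hzx : z = x
    · simp [hzx]
    · simpa [hzx] using h z (by simp [hz, hzx])

@[simp] theorem Fm.boundVars_subst (x : ℕ) (u : Tm) (C : Fm) :
    (Fm.subst x u C).boundVars = C.boundVars := by
  induction C with
  | all y A ih | ex y A ih => by_cases h : y = x <;> simp [Fm.subst, h, Fm.boundVars, ih]
  | _ => simp_all [Fm.subst, Fm.boundVars]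

theorem Fm.mem_freeVars_subst {x z : ℕ} {u : Tm} {C : Fm} (hz : z ∈ (Fm.subst x u C).freeVars) :
    (z ∈ C.freeVars ∧ z ≠ x) ∨ z ∈ u.varsT := by
  induction C with
  | atom p ts =>
    simp only [Fm.subst, Fm.freeVars, List.mem_flatMap, List.mem_map] at hz
    obtain ⟨_, ⟨t, ht, rfl⟩, hz⟩ := hz
    simpa [Fm.freeVars] using (Tm.mem_varsT_substT hz).imp_left fun h => ⟨⟨t, ht, h.1⟩, h.2⟩
  | neg A ih => exact ih hz
  | or A B ihA ihB | and A B ihA ihB =>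
    simp only [Fm.subst, Fm.freeVars, List.mem_append] at hz ⊢
    rcases hz with hz | hz
    · exact (ihA hz).imp_left fun h => ⟨Or.inl h.1, h.2⟩
    · exact (ihB hz).imp_left fun h => ⟨Or.inr h.1, h.2⟩
  | all y A ih | ex y A ih =>
    by_cases h : y = x
    · subst h
      simp only [Fm.subst, if_true, Fm.freeVars, List.mem_filter] at hz
      simp_all [Fm.freeVars]
    · simp only [Fm.subst, if_neg h, Fm.freeVars, List.mem_filter, decide_eq_true_eq] at hz
      simpa [Fm.freeVars, hz.2] using ih hz.1

theorem Fm.holds_subst {x : ℕ} {t : Tm} {C : Fm}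
    (hx : x ∉ C.boundVars) (ht : ∀ z ∈ t.varsT, z ∉ C.boundVars) {v : ℕ → D} :
    (Fm.subst x t C).holds I v ↔ C.holds I (Function.update v x (Tm.eval I v t)) := by
  induction C generalizing v with
  | atom p ts =>
    simp only [Fm.subst, Fm.holds, List.map_map, Function.comp_def, Tm.eval_substT]
  | neg A ih => exact not_congr (ih hx ht)
  | or A B ihA ihB | and A B ihA ihB =>
    simp only [Fm.boundVars, List.mem_append, not_or] at hx ht
    simp only [Fm.subst, Fm.holds]
    rw [ihA hx.1 fun z hz => (ht z hz).1, ihB hx.2 fun z hz => (ht z hz).2]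
  | all y A ih | ex y A ih =>
    simp only [Fm.boundVars, List.mem_cons, not_or] at hx ht
    have key : ∀ d, (Fm.subst x t A).holds I (Function.update v y d) ↔
        A.holds I (Function.update (Function.update v x (Tm.eval I v t)) y d) := fun d => by
      rw [ih hx.2 fun z hz => (ht z hz).2, Tm.eval_congr (w := v) fun z hz => by
        simp [Function.update_of_ne (ht z hz).1], Function.update_comm hx.1]
    simp only [Fm.subst, if_neg (Ne.symm hx.1), Fm.holds, key]

end Holds

theorem Fm.qf_subst {x : ℕ} {u : Tm} {C : Fm} (h : C.qf) : (Fm.subst x u C).qf := by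
  induction C with
  | all | ex => exact h.elim
  | _ => simp_all [Fm.subst, Fm.qf]

theorem Fm.boundVars_eq_nil_of_qf {C : Fm} (h : C.qf) : C.boundVars = [] := by
  induction C with
  | all | ex => exact h.elim
  | _ => simp_all [Fm.boundVars, Fm.qf]

section Sentential

variable {D : Type} {I : Interp D} {v : ℕ → D}

theorem Fm.holds_subst_of_qf {x : ℕ} {t : Tm} {C : Fm} (h : C.qf) :
    (Fm.subst x t C).holds I v ↔ C.holds I (Function.update v x (Tm.eval I v t)) :=
  Fm.holds_subst (by simp [Fm.boundVars_eq_nil_of_qf h]) (by simp [Fm.boundVars_eq_nil_of_qf h])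

open Classical in
theorem Fm.sentEval_eq_true_iff_holds {C : Fm} (h : C.qf) :
    C.sentEval (fun p ts => decide (I.prd p (ts.map (Tm.eval I v)))) = true ↔ C.holds I v := by
  induction C with
  | all | ex => exact h.elim
  | neg A ih => simp [Fm.sentEval, Fm.holds, ← ih h]
  | _ => simp_all [Fm.sentEval, Fm.holds, Fm.qf]

theorem Fm.taut.holds {C : Fm} (h : C.taut) (I : Interp D) (v : ℕ → D) : C.holds I v :=
  (Fm.sentEval_eq_true_iff_holds h.1).1 (h.2 _)

theorem qf_bigOr {l : List Fm} (h : ∀ G ∈ l, G.qf) : (bigOr l).qf := by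
  induction l using bigOr.induct <;> simp_all [bigOr, falsum, Fm.qf]

theorem qf_bigAnd {l : List Fm} (h : ∀ G ∈ l, G.qf) : (bigAnd l).qf := by
  induction l using bigAnd.induct <;> simp_all [bigAnd, verum, Fm.qf]

@[simp] theorem holds_bigOr {l : List Fm} : (bigOr l).holds I v ↔ ∃ G ∈ l, G.holds I v := by
  induction l using bigOr.induct <;> simp_all [bigOr, falsum, Fm.holds]

@[simp] theorem holds_bigAnd {l : List Fm} : (bigAnd l).holds I v ↔ ∀ G ∈ l, G.holds I v := by
  induction l using bigAnd.induct <;> simp_all [bigAnd, verum, Fm.holds, em]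

end Sentential

theorem Fm.qf_expandL (T : List Tm) (C : Fm) : (C.expandL T).qf := by
  induction C with
  | all x A ih => exact qf_bigAnd (by simpa using fun t _ => Fm.qf_subst ih)
  | ex x A ih => exact qf_bigOr (by simpa using fun t _ => Fm.qf_subst ih)
  | _ => simp_all [Fm.expandL, Fm.qf]

def Fm.IsExistentialoid : Fm → Bool → Prop
  | .atom _ _, _ => True
  | .neg A, b => A.IsExistentialoid (!b)
  | .or A B, b | .and A B, b => A.IsExistentialoid b ∧ B.IsExistentialoid b
  | .all _ A, b => b = false ∧ A.IsExistentialoid false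
  | .ex _ A, b => b = true ∧ A.IsExistentialoid true

theorem Fm.IsExistentialoid.subst {x : ℕ} {u : Tm} {C : Fm} {b : Bool}
    (h : C.IsExistentialoid b) : (Fm.subst x u C).IsExistentialoid b := by
  induction C generalizing b with
  | all y A ih | ex y A ih =>
    by_cases hy : y = x
    · simpa [Fm.subst, hy] using h
    · simpa [Fm.subst, hy, Fm.IsExistentialoid] using ⟨h.1, ih h.2⟩
  | atom => trivial
  | neg A ih => exact ih h
  | or A B ihA ihB | and A B ihA ihB => exact ⟨ihA h.1, ihB h.2⟩

section Expansion

variable {D : Type} {I : Interp D}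

theorem Fm.polImp_holds_expandL {T : List Tm} {C : Fm} {b : Bool} (hC : C.IsExistentialoid b)
    (v : ℕ → D) : PolImp b ((C.expandL T).holds I v) (C.holds I v) := by
  induction C generalizing b v with
  | atom => cases b <;> exact id
  | neg A ih => exact (ih hC v).not
  | or A B ihA ihB => exact (ihA hC.1 v).or (ihB hC.2 v)
  | and A B ihA ihB => exact (ihA hC.1 v).and (ihB hC.2 v)
  | all x A ih =>
    obtain ⟨rfl, hA⟩ := hC
    intro h
    simp only [Fm.expandL, holds_bigAnd, List.mem_map]
    rintro _ ⟨t, -, rfl⟩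
    exact (Fm.holds_subst_of_qf (Fm.qf_expandL T A)).2 (ih hA _ (h _))
  | ex x A ih =>
    obtain ⟨rfl, hA⟩ := hC
    simp only [Fm.expandL, holds_bigOr, List.mem_map]
    rintro ⟨_, ⟨t, -, rfl⟩, h⟩
    exact ⟨_, ih hA _ ((Fm.holds_subst_of_qf (Fm.qf_expandL T A)).1 h)⟩

theorem Fm.polImp_holds_expandL_of_subset {T T' : List Tm} (hT : T ⊆ T') {C : Fm} {b : Bool}
    (hC : C.IsExistentialoid b) (v : ℕ → D) :
    PolImp b ((C.expandL T).holds I v) ((C.expandL T').holds I v) := by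
  induction C generalizing b v with
  | atom => cases b <;> exact id
  | neg A ih => exact (ih hC v).not
  | or A B ihA ihB => exact (ihA hC.1 v).or (ihB hC.2 v)
  | and A B ihA ihB => exact (ihA hC.1 v).and (ihB hC.2 v)
  | all x A ih =>
    obtain ⟨rfl, hA⟩ := hC
    simp only [Fm.expandL, holds_bigAnd, List.mem_map]
    rintro h _ ⟨t, ht, rfl⟩
    have := h _ ⟨t, hT ht, rfl⟩
    rw [Fm.holds_subst_of_qf (Fm.qf_expandL T' A)] at this
    exact (Fm.holds_subst_of_qf (Fm.qf_expandL T A)).2 (ih hA _ this)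
  | ex x A ih =>
    obtain ⟨rfl, hA⟩ := hC
    simp only [Fm.expandL, holds_bigOr, List.mem_map]
    rintro ⟨_, ⟨t, ht, rfl⟩, h⟩
    rw [Fm.holds_subst_of_qf (Fm.qf_expandL T A)] at h
    exact ⟨_, ⟨t, hT ht, rfl⟩, (Fm.holds_subst_of_qf (Fm.qf_expandL T' A)).2 (ih hA _ h)⟩

end Expansion

@[simp] theorem skTm_varsT (x : ℕ) (γs : List ℕ) : (skTm x γs).varsT = γs := by
  simp [skTm, List.flatMap_map]

@[simp] theorem Tm.eval_skTm {D : Type} (I : Interp D) (v : ℕ → D) (x : ℕ) (γs : List ℕ) :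
    Tm.eval I v (skTm x γs) = I.fns (some (.inr x)) (γs.map v) := by
  simp [skTm, List.map_map, Function.comp_def]

theorem Fm.boundVars_skolemize_sublist (b : Bool) (γs : List ℕ) (C : Fm) :
    (C.skolemize b γs).boundVars.Sublist C.boundVars := by
  induction C generalizing b γs with
  | atom => simp [Fm.skolemize]
  | neg A ih => simpa [Fm.skolemize, Fm.boundVars] using ih (!b) γs
  | or A B ihA ihB | and A B ihA ihB =>
    simpa [Fm.skolemize, Fm.boundVars] using (ihA b γs).append (ihB b γs)
  | all x A ih =>
    cases b
    · simpa [Fm.skolemize, Fm.boundVars] using (ih _ _).cons_cons x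
    · simpa [Fm.skolemize, Fm.boundVars] using (ih _ _).cons x
  | ex x A ih =>
    cases b
    · simpa [Fm.skolemize, Fm.boundVars] using (ih _ _).cons x
    · simpa [Fm.skolemize, Fm.boundVars] using (ih _ _).cons_cons x

theorem Fm.mem_freeVars_skolemize {b : Bool} {γs : List ℕ} {C : Fm} {z : ℕ}
    (hz : z ∈ (C.skolemize b γs).freeVars) : z ∈ C.freeVars ∨ z ∈ γs := by
  induction C generalizing b γs with
  | atom => exact Or.inl (by simpa [Fm.skolemize] using hz)
  | neg A ih => exact ih hz
  | or A B ihA ihB | and A B ihA ihB =>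
    simp only [Fm.skolemize, Fm.freeVars, List.mem_append] at hz ⊢
    rcases hz with hz | hz
    · exact (ihA hz).imp_left Or.inl
    · exact (ihB hz).imp_left Or.inr
  | all x A ih | ex x A ih =>
    have hsub : ∀ {b}, z ∈ (Fm.subst x (skTm x γs) (A.skolemize b γs)).freeVars →
        z ∈ A.freeVars.filter (· ≠ x) ∨ z ∈ γs := fun hz => by
      rcases Fm.mem_freeVars_subst hz with ⟨hz, hzx⟩ | hz
      · simpa [hzx] using ih hz
      · simp_all
    have hfilter : ∀ {b}, z ∈ (A.skolemize b (γs ++ [x])).freeVars.filter (· ≠ x) →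
        z ∈ A.freeVars.filter (· ≠ x) ∨ z ∈ γs := fun hz => by
      simp only [List.mem_filter, decide_eq_true_eq] at hz
      simpa [hz.2] using ih hz.1
    cases b <;> simp only [Fm.skolemize, Bool.false_eq_true, ↓reduceIte] at hz <;>
      first | exact hsub hz | exact hfilter hz

theorem Fm.isExistentialoid_skolemize (C : Fm) (b : Bool) (γs : List ℕ) :
    (C.skolemize b γs).IsExistentialoid b := by
  induction C generalizing b γs with
  | atom => trivial
  | neg A ih => exact ih (!b) γs
  | or A B ihA ihB | and A B ihA ihB => exact ⟨ihA b γs, ihB b γs⟩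
  | all x A ih =>
    cases b
    exacts [⟨rfl, ih _ _⟩, (ih _ _).subst]
  | ex x A ih =>
    cases b
    exacts [(ih _ _).subst, ⟨rfl, ih _ _⟩]

section Skolemize

variable {D : Type} {I : Interp D}

theorem Fm.holds_subst_skTm_skolemize {x : ℕ} {γs : List ℕ} {b : Bool} {A : Fm}
    (hx : x ∉ A.boundVars) (hγ : ∀ z ∈ γs, z ∉ A.boundVars) {w : ℕ → D} :
    (Fm.subst x (skTm x γs) (A.skolemize b γs)).holds I w ↔
      (A.skolemize b γs).holds I (Function.update w x (I.fns (some (.inr x)) (γs.map w))) := by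
  have hsub := Fm.boundVars_skolemize_sublist b γs A
  rw [Fm.holds_subst (fun h => hx (hsub.mem h))
    (by simpa using fun z hz h => hγ z hz (hsub.mem h)), Tm.eval_skTm]

theorem Fm.polImp_holds_skolemize {C : Fm} {b : Bool} {γs : List ℕ} (hN : C.boundVars.Nodup)
    (hγ : ∀ z ∈ γs, z ∉ C.boundVars) (v : ℕ → D) :
    PolImp b (C.holds I v) ((C.skolemize b γs).holds I v) := by
  induction C generalizing b γs v with
  | atom => cases b <;> exact id
  | neg A ih => exact (ih hN hγ v).not
  | or A B ihA ihB | and A B ihA ihB =>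
    simp only [Fm.boundVars, List.nodup_append, List.mem_append, not_or] at hN hγ
    have hA := ihA (b := b) hN.1 (fun z hz => (hγ z hz).1) v
    have hB := ihB (b := b) hN.2.1 (fun z hz => (hγ z hz).2) v
    first | exact hA.or hB | exact hA.and hB
  | all x A ih =>
    simp only [Fm.boundVars, List.nodup_cons, List.mem_cons, not_or] at hN hγ
    have hγx : ∀ z ∈ γs ++ [x], z ∉ A.boundVars := by
      simp only [List.mem_append, List.mem_singleton]
      rintro z (hz | rfl)
      exacts [(hγ z hz).2, hN.1]
    cases b
    · exact fun h d => ih (b := false) hN.2 hγx _ (h d)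
    · intro h
      simp only [Fm.skolemize, if_true]
      rw [Fm.holds_subst_skTm_skolemize hN.1 fun z hz => (hγ z hz).2]
      exact ih (b := true) hN.2 (fun z hz => (hγ z hz).2) _ (h _)
  | ex x A ih =>
    simp only [Fm.boundVars, List.nodup_cons, List.mem_cons, not_or] at hN hγ
    have hγx : ∀ z ∈ γs ++ [x], z ∉ A.boundVars := by
      simp only [List.mem_append, List.mem_singleton]
      rintro z (hz | rfl)
      exacts [(hγ z hz).2, hN.1]
    cases b
    · intro h
      simp only [Fm.skolemize, Bool.false_eq_true, if_false] at h
      rw [Fm.holds_subst_skTm_skolemize hN.1 fun z hz => (hγ z hz).2] at h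
      exact ⟨_, ih (b := false) hN.2 (fun z hz => (hγ z hz).2) _ h⟩
    · exact fun ⟨d, h⟩ => ⟨d, ih (b := true) hN.2 hγx _ h⟩

end Skolemize

theorem mem_tuples {T l : List Tm} {k : ℕ} :
    l ∈ tuples k T ↔ l.length = k ∧ ∀ a ∈ l, a ∈ T := by
  induction k generalizing l with
  | zero => simp +contextual [tuples, List.length_eq_zero_iff]
  | succ k ih =>
    cases l with
    | nil => simp [tuples]
    | cons a l => simp [tuples, ih, and_left_comm]

def Fm.herbrandSyms (F : Fm) : List (FSym × ℕ) :=
  F.symsF ++ if F.allowBullet then [(none, 0)] else []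

def Fm.IsHerbrandTerm (F : Fm) (t : Tm) : Prop :=
  t.symsT ⊆ F.herbrandSyms ∧ t.varsT ⊆ F.freeVars

section HerbrandTerms

variable {F : Fm}

@[simp] theorem Fm.isHerbrandTerm_var {z : ℕ} : F.IsHerbrandTerm (.var z) ↔ z ∈ F.freeVars := by
  simp [Fm.IsHerbrandTerm]

theorem Fm.isHerbrandTerm_fn {f : FSym} {ts : List Tm} :
    F.IsHerbrandTerm (.fn f ts) ↔
      (f, ts.length) ∈ F.herbrandSyms ∧ ∀ t ∈ ts, F.IsHerbrandTerm t := by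
  simp only [Fm.IsHerbrandTerm, Tm.symsT_fn, Tm.varsT_fn, List.subset_def, List.mem_flatMap]
  grind

theorem Fm.mem_champTm_add_two {m : ℕ} {t : Tm} :
    t ∈ F.champTm (m + 2) ↔ (∃ z ∈ F.freeVars, t = .var z) ∨
      (F.allowBullet ∧ t = .fn none []) ∨
      ∃ f ts, t = .fn f ts ∧ (f, ts.length) ∈ F.symsF ∧ ∀ s ∈ ts, s ∈ F.champTm (m + 1) := by
  simp only [Fm.champTm, List.mem_append, List.mem_map, List.mem_flatMap, mem_tuples]
  split_ifs <;> simp [eq_comm (a := t)] <;> grind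

theorem Fm.mem_champTm {n : ℕ} (hn : 2 ≤ n) {t : Tm} :
    t ∈ F.champTm n ↔ F.IsHerbrandTerm t ∧ t.height < n := by
  obtain ⟨m, rfl⟩ := Nat.exists_eq_add_of_le' hn
  induction t generalizing m with
  | var z => simp [Fm.mem_champTm_add_two, Tm.height]
  | fn f ts ih =>
    have hsub : ∀ s ∈ ts, s ∈ F.champTm (m + 1) ↔ F.IsHerbrandTerm s ∧ s.height < m + 1 := by
      intro s hs
      cases m with
      | zero => simp [Fm.champTm, (Tm.height_pos s).ne']
      | succ m => exact ih s hs m le_add_self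
    rw [Fm.mem_champTm_add_two, Fm.isHerbrandTerm_fn, Tm.height_fn_lt_iff, Fm.herbrandSyms]
    split_ifs <;> simp +contextual [hsub] <;> grind

theorem Fm.two_le_of_mem_champTm {n : ℕ} {t : Tm} (ht : t ∈ F.champTm n) : 2 ≤ n := by
  rcases n with _ | _ | n <;> simp_all [Fm.champTm]

theorem Fm.isHerbrandTerm_of_mem_champTm {n : ℕ} {t : Tm} (ht : t ∈ F.champTm n) :
    F.IsHerbrandTerm t :=
  ((Fm.mem_champTm (Fm.two_le_of_mem_champTm ht)).1 ht).1

end HerbrandTerms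

theorem Fm.atoms_subst_of_qf {x : ℕ} {u : Tm} {C : Fm} (h : C.qf) :
    (Fm.subst x u C).atoms = C.atoms.map fun a => (a.1, a.2.map (Tm.substT x u)) := by
  induction C with
  | all | ex => exact h.elim
  | _ => simp_all [Fm.subst, Fm.atoms, Fm.qf]

theorem mem_atoms_bigOr {l : List Fm} {a : ℕ × List Tm} (ha : a ∈ (bigOr l).atoms) :
    (∃ G ∈ l, a ∈ G.atoms) ∨ a = (0, []) := by
  induction l using bigOr.induct with
  | case3 A B rest ih =>
    simp only [bigOr, Fm.atoms, List.mem_append] at ha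
    rcases ha with ha | ha
    · exact Or.inl ⟨A, by simp, ha⟩
    · exact (ih ha).imp_left fun ⟨G, hG, h⟩ => ⟨G, List.mem_cons_of_mem _ hG, h⟩
  | _ => simp_all [bigOr, falsum, Fm.atoms]

theorem mem_atoms_bigAnd {l : List Fm} {a : ℕ × List Tm} (ha : a ∈ (bigAnd l).atoms) :
    (∃ G ∈ l, a ∈ G.atoms) ∨ a = (0, []) := by
  induction l using bigAnd.induct with
  | case3 A B rest ih =>
    simp only [bigAnd, Fm.atoms, List.mem_append] at ha
    rcases ha with ha | ha
    · exact Or.inl ⟨A, by simp, ha⟩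
    · exact (ih ha).imp_left fun ⟨G, hG, h⟩ => ⟨G, List.mem_cons_of_mem _ hG, h⟩
  | _ => simp_all [bigAnd, verum, Fm.atoms]

theorem Fm.subset_of_mem_atoms_expandL {T : List Tm} {C : Fm} {a : ℕ × List Tm}
    (ha : a ∈ (C.expandL T).atoms) {s : Tm} (hs : s ∈ a.2) :
    s.symsT ⊆ C.symsF ++ T.flatMap Tm.symsT ∧ s.varsT ⊆ C.freeVars ++ T.flatMap Tm.varsT := by
  induction C generalizing a s with
  | atom p ts =>
    simp only [Fm.expandL, Fm.atoms, List.mem_singleton] at ha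
    subst ha
    constructor <;> intro q hq <;> simpa [Fm.symsF, Fm.freeVars] using Or.inl ⟨s, hs, hq⟩
  | neg A ih => exact ih ha hs
  | or A B ihA ihB | and A B ihA ihB =>
    simp only [Fm.expandL, Fm.atoms, List.mem_append] at ha
    rcases ha with ha | ha
    · exact ⟨List.Subset.trans (ihA ha hs).1 (by simp [Fm.symsF]),
        List.Subset.trans (ihA ha hs).2 (by simp [Fm.freeVars])⟩
    · exact ⟨List.Subset.trans (ihB ha hs).1 (by simp [Fm.symsF]),
        List.Subset.trans (ihB ha hs).2 (by simp [Fm.freeVars])⟩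
  | all x A ih | ex x A ih =>
    simp only [Fm.expandL] at ha
    obtain ⟨G, hG, haG⟩ | rfl : (∃ G ∈ T.map fun t => Fm.subst x t (A.expandL T),
        a ∈ G.atoms) ∨ a = (0, []) := by
      first | exact mem_atoms_bigAnd ha | exact mem_atoms_bigOr ha
    · obtain ⟨t, ht, rfl⟩ := List.mem_map.1 hG
      rw [Fm.atoms_subst_of_qf (Fm.qf_expandL T A)] at haG
      obtain ⟨a₀, ha₀, rfl⟩ := List.mem_map.1 haG
      obtain ⟨s₀, hs₀, rfl⟩ := List.mem_map.1 hs
      obtain ⟨hsyms, hvars⟩ := ih ha₀ hs₀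
      constructor
      · intro q hq
        rcases Tm.mem_symsT_substT hq with hq | hq
        · simpa [Fm.symsF] using hsyms hq
        · simpa using Or.inr ⟨t, ht, hq⟩
      · intro z hz
        rcases Tm.mem_varsT_substT hz with ⟨hz, hzx⟩ | hz
        · simpa [Fm.freeVars, hzx] using hvars hz
        · simpa using Or.inr ⟨t, ht, hz⟩
    · simp at hs

theorem Fm.isHerbrandTerm_of_mem_atoms_expandL_champTm {F : Fm} {m : ℕ} {a : ℕ × List Tm}
    (ha : a ∈ (F.expandL (F.champTm m)).atoms) {s : Tm} (hs : s ∈ a.2) : F.IsHerbrandTerm s := by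
  obtain ⟨hsyms, hvars⟩ := Fm.subset_of_mem_atoms_expandL ha hs
  constructor
  · intro q hq
    rcases List.mem_append.1 (hsyms hq) with hq | hq
    · exact List.mem_append_left _ hq
    · obtain ⟨t, ht, hq⟩ := List.mem_flatMap.1 hq
      exact (Fm.isHerbrandTerm_of_mem_champTm ht).1 hq
  · intro z hz
    rcases List.mem_append.1 (hvars hz) with hz | hz
    · exact hz
    · obtain ⟨t, ht, hz⟩ := List.mem_flatMap.1 hz
      exact (Fm.isHerbrandTerm_of_mem_champTm ht).2 hz

abbrev Fm.HerbrandUniverse (F : Fm) : Type := {t : Tm // F.IsHerbrandTerm t}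

instance Fm.instNonemptyHerbrandUniverse (F : Fm) : Nonempty F.HerbrandUniverse := by
  by_cases hfv : F.freeVars = []
  · by_cases hc : ∃ p ∈ F.symsF, p.2 = 0
    · obtain ⟨⟨f, _⟩, hp, rfl⟩ := hc
      exact ⟨⟨.fn f [], Fm.isHerbrandTerm_fn.2 ⟨by simp [Fm.herbrandSyms, hp], by simp⟩⟩⟩
    · have hb : F.allowBullet = true := by
        simp_all only [Fm.allowBullet, List.isEmpty_nil, List.all_eq_true, Bool.true_and]
        rintro ⟨f, _⟩ hp
        simpa using fun h => hc ⟨_, hp, h⟩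
      exact ⟨⟨.fn none [], Fm.isHerbrandTerm_fn.2 ⟨by simp [Fm.herbrandSyms, hb], by simp⟩⟩⟩
  · obtain ⟨z, hz⟩ := List.exists_mem_of_ne_nil _ hfv
    exact ⟨⟨.var z, by simpa⟩⟩

open Classical in
noncomputable def Fm.herbrandInterp (F : Fm) (β : ℕ → List Tm → Bool) :
    Interp F.HerbrandUniverse where
  fns f ds :=
    if h : (f, ds.length) ∈ F.herbrandSyms then
      ⟨.fn f (ds.map Subtype.val), Fm.isHerbrandTerm_fn.2 ⟨by simpa using h, fun t ht => by
        obtain ⟨d, -, rfl⟩ := List.mem_map.1 ht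
        exact d.2⟩⟩
    else Classical.arbitrary _
  prd p ds := β p (ds.map Subtype.val) = true

noncomputable def Fm.herbrandAssign (F : Fm) (z : ℕ) : F.HerbrandUniverse :=
  if h : z ∈ F.freeVars then ⟨.var z, by simpa⟩ else Classical.arbitrary _

section HerbrandModel

variable {F : Fm} {β : ℕ → List Tm → Bool}

theorem Fm.val_herbrandInterp_fns {f : FSym} {ds : List F.HerbrandUniverse}
    (h : (f, ds.length) ∈ F.herbrandSyms) :
    ((F.herbrandInterp β).fns f ds).val = .fn f (ds.map Subtype.val) := by
  simp [Fm.herbrandInterp, h]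

theorem Fm.val_eval_herbrandInterp {v : ℕ → F.HerbrandUniverse}
    (hv : ∀ z ∈ F.freeVars, v z = F.herbrandAssign z) {t : Tm} (ht : F.IsHerbrandTerm t) :
    (Tm.eval (F.herbrandInterp β) v t).val = t := by
  induction t with
  | var z =>
    have hz : z ∈ F.freeVars := by simpa using ht
    simp [hv z hz, Fm.herbrandAssign, hz]
  | fn f ts ih =>
    rw [Fm.isHerbrandTerm_fn] at ht
    rw [Tm.eval_fn, Fm.val_herbrandInterp_fns (by simpa using ht.1), List.map_map]
    exact congrArg _ ((List.map_congr_left fun t h => ih t h (ht.2 t h)).trans (List.map_id' ts))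

theorem Fm.sentEval_eq_true_iff_holds_herbrandInterp {G : Fm} (hG : G.qf)
    (hat : ∀ a ∈ G.atoms, ∀ s ∈ a.2, F.IsHerbrandTerm s) :
    G.sentEval β = true ↔ G.holds (F.herbrandInterp β) F.herbrandAssign := by
  induction G with
  | atom p ts =>
    change β p ts = true ↔ β p ((ts.map _).map Subtype.val) = true
    rw [List.map_map, Function.comp_def, (List.map_congr_left fun t ht =>
      Fm.val_eval_herbrandInterp (fun _ _ => rfl) (hat (p, ts) (by simp [Fm.atoms]) t ht)).trans
      (List.map_id' ts)]
  | neg A ih => simpa [Fm.sentEval, Fm.holds] using not_congr (ih hG hat)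
  | or A B ihA ihB | and A B ihA ihB =>
    simp only [Fm.atoms, List.mem_append] at hat
    simp [Fm.sentEval, Fm.holds, ihA hG.1 fun a ha => hat a (Or.inl ha),
      ihB hG.2 fun a ha => hat a (Or.inr ha)]
  | all | ex => exact hG.elim

theorem Fm.sentEval_expandL_champTm_eq_true_iff {m : ℕ} :
    (F.expandL (F.champTm m)).sentEval β = true ↔
      (F.expandL (F.champTm m)).holds (F.herbrandInterp β) F.herbrandAssign :=
  Fm.sentEval_eq_true_iff_holds_herbrandInterp (Fm.qf_expandL _ F) fun _ ha _ hs =>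
    Fm.isHerbrandTerm_of_mem_atoms_expandL_champTm ha hs

theorem Fm.champTm_mono {m n : ℕ} (h : m ≤ n) : F.champTm m ⊆ F.champTm n := by
  intro t ht
  have hm := Fm.two_le_of_mem_champTm ht
  obtain ⟨hH, hlt⟩ := (Fm.mem_champTm hm).1 ht
  exact (Fm.mem_champTm (hm.trans h)).2 ⟨hH, hlt.trans_le h⟩

theorem Fm.eventually_mem_champTm {t : Tm} (ht : F.IsHerbrandTerm t) :
    ∀ᶠ m in atTop, t ∈ F.champTm m :=
  (eventually_ge_atTop (t.height + 2)).mono fun _ hm =>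
    (Fm.mem_champTm (by omega)).2 ⟨ht, by omega⟩

theorem Fm.holds_subst_val_herbrandInterp {v : ℕ → F.HerbrandUniverse}
    (hv : ∀ z ∈ F.freeVars, v z = F.herbrandAssign z) {x : ℕ} {d : F.HerbrandUniverse}
    {C : Fm} (hC : C.qf) :
    (Fm.subst x d.val C).holds (F.herbrandInterp β) v ↔
      C.holds (F.herbrandInterp β) (Function.update v x d) := by
  rw [Fm.holds_subst_of_qf hC, Subtype.ext (Fm.val_eval_herbrandInterp hv d.2)]

theorem update_eq_herbrandAssign {v : ℕ → F.HerbrandUniverse} {x : ℕ} (hx : x ∉ F.freeVars)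
    (hv : ∀ z ∈ F.freeVars, v z = F.herbrandAssign z) (d : F.HerbrandUniverse) :
    ∀ z ∈ F.freeVars, Function.update v x d z = F.herbrandAssign z :=
  fun z hz => by rw [Function.update_of_ne (by rintro rfl; exact hx hz), hv z hz]

theorem Fm.eventually_holds_expandL_champTm_iff {C : Fm} {b : Bool}
    (hC : C.IsExistentialoid b) (hbv : ∀ z ∈ C.boundVars, z ∉ F.freeVars)
    {v : ℕ → F.HerbrandUniverse} (hv : ∀ z ∈ F.freeVars, v z = F.herbrandAssign z) :
    ∀ᶠ m in atTop, ((C.expandL (F.champTm m)).holds (F.herbrandInterp β) v ↔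
      C.holds (F.herbrandInterp β) v) := by
  induction C generalizing b v with
  | atom => exact .of_forall fun _ => Iff.rfl
  | neg A ih => exact (ih hC hbv hv).mono fun _ h => not_congr h
  | or A B ihA ihB | and A B ihA ihB =>
    simp only [Fm.boundVars, List.mem_append] at hbv
    have hAB := (ihA hC.1 (fun z hz => hbv z (.inl hz)) hv).and
      (ihB hC.2 (fun z hz => hbv z (.inr hz)) hv)
    first
    | exact hAB.mono fun _ h => or_congr h.1 h.2
    | exact hAB.mono fun _ h => and_congr h.1 h.2
  | all x A ih =>
    obtain ⟨rfl, hA⟩ := hC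
    simp only [Fm.boundVars, List.mem_cons, forall_eq_or_imp] at hbv
    by_cases h : (Fm.all x A).holds (F.herbrandInterp β) v
    · exact .of_forall fun m =>
        iff_of_true (Fm.polImp_holds_expandL (C := .all x A) (b := false) ⟨rfl, hA⟩ v h) h
    · obtain ⟨d, hd⟩ : ∃ d, ¬ A.holds (F.herbrandInterp β) (Function.update v x d) := by
        simpa [Fm.holds] using h
      filter_upwards [ih hA hbv.2 (update_eq_herbrandAssign hbv.1 hv d),
        Fm.eventually_mem_champTm d.2] with m hm hdm
      refine iff_of_false (fun hE => hd (hm.1 ?_)) h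
      simp only [Fm.expandL, holds_bigAnd, List.mem_map] at hE
      exact (Fm.holds_subst_val_herbrandInterp hv (Fm.qf_expandL _ A)).1 (hE _ ⟨_, hdm, rfl⟩)
  | ex x A ih =>
    obtain ⟨rfl, hA⟩ := hC
    simp only [Fm.boundVars, List.mem_cons, forall_eq_or_imp] at hbv
    by_cases h : (Fm.ex x A).holds (F.herbrandInterp β) v
    · obtain ⟨d, hd⟩ := h
      filter_upwards [ih hA hbv.2 (update_eq_herbrandAssign hbv.1 hv d),
        Fm.eventually_mem_champTm d.2] with m hm hdm
      refine iff_of_true ?_ ⟨d, hd⟩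
      simp only [Fm.expandL, holds_bigOr, List.mem_map]
      exact ⟨_, ⟨_, hdm, rfl⟩,
        (Fm.holds_subst_val_herbrandInterp hv (Fm.qf_expandL _ A)).2 (hm.2 hd)⟩
    · exact .of_forall fun m => iff_of_false (fun hE =>
        h (Fm.polImp_holds_expandL (C := .ex x A) (b := true) ⟨rfl, hA⟩ v hE)) h

end HerbrandModel

theorem continuous_sentEval (G : Fm) : Continuous fun β : ℕ → List Tm → Bool => G.sentEval β := by
  induction G with
  | atom p ts => exact (continuous_apply ts).comp (continuous_apply p)
  | neg A ih => exact (continuous_of_discreteTopology (f := not)).comp ih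
  | or A B ihA ihB =>
    exact (continuous_of_discreteTopology (f := fun b : Bool × Bool => b.1 || b.2)).comp
      (ihA.prodMk ihB)
  | and A B ihA ihB =>
    exact (continuous_of_discreteTopology (f := fun b : Bool × Bool => b.1 && b.2)).comp
      (ihA.prodMk ihB)
  | all | ex => exact continuous_const

theorem exists_forall_sentEval_eq_false {G : ℕ → Fm}
    (hmono : ∀ m β, (G m).sentEval β = true → (G (m + 1)).sentEval β = true)
    (hG : ∀ m, ∃ β, (G m).sentEval β = false) : ∃ β, ∀ m, (G m).sentEval β = false := by
  let K : ℕ → Set (ℕ → List Tm → Bool) := fun m => (fun β => (G m).sentEval β) ⁻¹' {false}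
  have hK : ∀ m, IsClosed (K m) := fun m => (isClosed_discrete _).preimage (continuous_sentEval _)
  have hanti : ∀ m, K (m + 1) ⊆ K m := fun m β hβ => by
    simpa [K] using mt (hmono m β) (by simpa [K] using hβ)
  simpa [K, Set.nonempty_iInter] using
    IsCompact.nonempty_iInter_of_sequence_nonempty_isCompact_isClosed K hanti hG
      (hK 0).isCompact hK

theorem Fm.exists_sentEval_expandL_eq_false {A : Fm} {n : ℕ} (hn : n ≠ 1) (h : ¬ A.hasC n) :
    ∃ β, (A.outerSk.expandL (A.outerSk.champTm n)).sentEval β = false := by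
  rw [Fm.hasC, if_neg hn, Fm.taut] at h
  obtain ⟨β, hβ⟩ := not_forall.1 (h ∘ And.intro (Fm.qf_expandL _ _))
  exact ⟨β, by simpa using hβ⟩

theorem Fm.rectified.notMem_freeVars_outerSk {A : Fm} (hrect : A.rectified) :
    ∀ z ∈ A.outerSk.boundVars, z ∉ A.outerSk.freeVars := fun z hz hzf => by
  rcases Fm.mem_freeVars_skolemize hzf with hzf | hzf
  · exact hrect.2 z ((Fm.boundVars_skolemize_sublist true [] A).mem hz) hzf
  · simp at hzf

theorem hasC_of_valid {A : Fm} (hrect : A.rectified) (hvalid : A.valid) :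
    ∃ n, 0 < n ∧ A.hasC n := by
  by_contra! hC
  set F := A.outerSk
  have hmono : ∀ m β, (F.expandL (F.champTm (m + 2))).sentEval β = true →
      (F.expandL (F.champTm (m + 3))).sentEval β = true := fun m β h => by
    rw [Fm.sentEval_expandL_champTm_eq_true_iff] at h ⊢
    exact Fm.polImp_holds_expandL_of_subset (b := true) (Fm.champTm_mono (by omega))
      (A.isExistentialoid_skolemize true []) _ h
  obtain ⟨β, hβ⟩ := exists_forall_sentEval_eq_false hmono fun m =>
    Fm.exists_sentEval_expandL_eq_false (by omega) (hC (m + 2) (by omega))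
  have hF : F.holds (F.herbrandInterp β) F.herbrandAssign :=
    Fm.polImp_holds_skolemize (b := true) (γs := []) hrect.1 (by simp) _
      (hvalid _ inferInstance _ _)
  obtain ⟨m, hm, h2⟩ := ((Fm.eventually_holds_expandL_champTm_iff
    (A.isExistentialoid_skolemize true []) hrect.notMem_freeVars_outerSk fun _ _ => rfl).and
    (eventually_ge_atTop 2)).exists
  have := hβ (m - 2)
  rw [Nat.sub_add_cancel h2, ← Bool.not_eq_true, Fm.sentEval_expandL_champTm_eq_true_iff] at this
  exact this (hm.2 hF)

section SkolemModel

variable {D : Type}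

def Interp.withSkolem (I : Interp D) (S : ℕ → Option (List D → D)) : Interp D where
  fns
    | some (.inr x) => (S x).getD (I.fns (some (.inr x)))
    | f => I.fns f
  prd := I.prd

theorem Tm.eval_withSkolem {I : Interp D} {S : ℕ → Option (List D → D)} {v : ℕ → D} {t : Tm}
    (ht : t.isBaseT) : Tm.eval (I.withSkolem S) v t = Tm.eval I v t := by
  induction t with
  | var => simp
  | fn f ts ih =>
    obtain ⟨k, rfl⟩ : ∃ k, f = some (.inl k) := by simpa using ht (f, ts.length) (by simp)
    simp only [Tm.eval_fn]
    exact congrArg _ (List.map_congr_left fun t h => ih t h fun p hp =>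
      ht p (by simpa using Or.inr ⟨t, h, hp⟩))

def assignLast (ρ : List D → ℕ → D) (x : ℕ) (ds : List D) : ℕ → D :=
  Function.update (ρ ds.dropLast) x (ds.getLastD (ρ ds.dropLast x))

theorem Interp.withSkolem_fns_of_update {I : Interp D} {S F : ℕ → Option (List D → D)} {x : ℕ}
    {e : List D → D} (hS : ∀ y e', Function.update F x (some e) y = some e' → S y = some e')
    (hF : F x = none) :
    (I.withSkolem S).fns (some (.inr x)) = e ∧ ∀ y e', F y = some e' → S y = some e' := by
  refine ⟨by simp [Interp.withSkolem, hS x e (by simp)], fun y e' h => hS y e' ?_⟩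
  rwa [Function.update_of_ne (by rintro rfl; simp [hF] at h)]

theorem map_update_of_notMem {γs : List ℕ} {x : ℕ} (hxγ : x ∉ γs) (w : ℕ → D) (d : D) :
    γs.map (Function.update w x d) = γs.map w :=
  List.map_congr_left fun z hz => Function.update_of_ne (by rintro rfl; exact hxγ hz) ..

theorem eqOn_assignLast {l γs : List ℕ} {x : ℕ} (hxγ : x ∉ γs) {ρ : List D → ℕ → D}
    {w : ℕ → D} (hw : ∀ z ∈ l.filter (· ≠ x), w z = ρ (γs.map w) z) (d : D) :
    ∀ z ∈ l, Function.update w x d z =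
      assignLast ρ x ((γs ++ [x]).map (Function.update w x d)) z := by
  intro z hz
  by_cases hzx : z = x
  · simp [hzx, assignLast]
  · simpa [hzx, assignLast, map_update_of_notMem hxγ] using hw z (by simp [hz, hzx])

theorem eqOn_update_witness {l γs : List ℕ} {x : ℕ} (hxγ : x ∉ γs) {ρ : List D → ℕ → D}
    {w : ℕ → D} (hw : ∀ z ∈ l.filter (· ≠ x), w z = ρ (γs.map w) z) (f : List D → D) :
    ∀ z ∈ l, Function.update w x (f (γs.map w)) z =
      Function.update (ρ (γs.map (Function.update w x (f (γs.map w))))) x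
        (f (γs.map (Function.update w x (f (γs.map w))))) z := by
  intro z hz
  by_cases hzx : z = x
  · simp [hzx, map_update_of_notMem hxγ]
  · simpa [hzx, map_update_of_notMem hxγ] using hw z (by simp [hz, hzx])

variable [Nonempty D] (I : Interp D)

/-- A counterexample to `∀x.A` if `b`, a witness of `∃x.A` otherwise, whenever there is one. -/
noncomputable def skolemWitness (A : Fm) (x : ℕ) (b : Bool) (ρ : List D → ℕ → D)
    (ds : List D) : D :=
  Classical.epsilon fun d => (A.holds I (Function.update (ρ ds) x d) ↔ b = false)

/-- The Skolem functions of the universaloid quantifiers of `C` at polarity `b`, read as choice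
functions for counterexamples in `I`. A Skolem function receives the values `ds` of the
existentialoid variables in scope, and `ρ ds` is the assignment these determine, the universaloid
variables in scope taking the values of their own Skolem functions. -/
noncomputable def Fm.skolemFns : Fm → Bool → (List D → ℕ → D) → ℕ → Option (List D → D)
  | .atom _ _, _, _ => fun _ => none
  | .neg A, b, ρ => A.skolemFns (!b) ρ
  | .or A B, b, ρ | .and A B, b, ρ => fun y => (A.skolemFns b ρ y).or (B.skolemFns b ρ y)
  | .all x A, b, ρ =>
      if b then
        Function.update
          (A.skolemFns b fun ds => Function.update (ρ ds) x (skolemWitness I A x b ρ ds))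
          x (some (skolemWitness I A x b ρ))
      else A.skolemFns b (assignLast ρ x)
  | .ex x A, b, ρ =>
      if b then A.skolemFns b (assignLast ρ x)
      else
        Function.update
          (A.skolemFns b fun ds => Function.update (ρ ds) x (skolemWitness I A x b ρ ds))
          x (some (skolemWitness I A x b ρ))

theorem Fm.skolemFns_eq_none {C : Fm} {b : Bool} {ρ : List D → ℕ → D} {y : ℕ}
    (hy : y ∉ C.boundVars) : C.skolemFns I b ρ y = none := by
  induction C generalizing b ρ with
  | atom => rfl
  | neg A ih => exact ih hy
  | or A B ihA ihB | and A B ihA ihB =>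
    simp only [Fm.boundVars, List.mem_append, not_or] at hy
    simp [Fm.skolemFns, ihA hy.1, ihB hy.2]
  | all x A ih | ex x A ih =>
    simp only [Fm.boundVars, List.mem_cons, not_or] at hy
    cases b <;> simp [Fm.skolemFns, Function.update_of_ne hy.1, ih hy.2]

variable {I}

theorem skolemWitness_spec {A : Fm} {x : ℕ} {b : Bool} {γs : List ℕ} {ρ : List D → ℕ → D}
    {w : ℕ → D} (hw : ∀ z ∈ A.freeVars.filter (· ≠ x), w z = ρ (γs.map w) z)
    (h : ∃ d, (A.holds I (Function.update w x d) ↔ b = false)) :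
    A.holds I (Function.update w x (skolemWitness I A x b ρ (γs.map w))) ↔ b = false := by
  simp only [Fm.holds_update_congr hw] at h ⊢
  exact Classical.epsilon_spec h

theorem Fm.polImp_skolemize_holds_withSkolem {C : Fm} {b : Bool} {γs : List ℕ}
    {ρ : List D → ℕ → D} (hN : C.boundVars.Nodup) (hγ : ∀ z ∈ γs, z ∉ C.boundVars)
    (hC : C.isBase) {S : ℕ → Option (List D → D)}
    (hS : ∀ y e, C.skolemFns I b ρ y = some e → S y = some e)
    {w : ℕ → D} (hw : ∀ z ∈ C.freeVars, w z = ρ (γs.map w) z) :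
    PolImp b ((C.skolemize b γs).holds (I.withSkolem S) w) (C.holds I w) := by
  induction C generalizing b γs ρ w with
  | atom p ts =>
    have : (Fm.atom p ts).holds (I.withSkolem S) w ↔ (Fm.atom p ts).holds I w := by
      simp only [Fm.holds]
      rw [List.map_congr_left fun t ht => Tm.eval_withSkolem fun q hq =>
        hC q (by simpa [Fm.symsF] using ⟨t, ht, hq⟩)]
      rfl
    cases b
    exacts [this.2, this.1]
  | neg A ih => exact (ih hN hγ hC hS hw).not
  | or A B ihA ihB | and A B ihA ihB =>
    simp only [Fm.boundVars, List.nodup_append, List.mem_append, not_or] at hN hγ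
    have hSA : ∀ y e, A.skolemFns I b ρ y = some e → S y = some e := fun y e h =>
      hS y e (by simp [Fm.skolemFns, h])
    have hSB : ∀ y e, B.skolemFns I b ρ y = some e → S y = some e := by
      intro y e h
      have hy : y ∈ B.boundVars := by
        by_contra hy
        rw [Fm.skolemFns_eq_none I hy] at h
        cases h
      refine hS y e ?_
      simp [Fm.skolemFns, Fm.skolemFns_eq_none I fun hyA => hN.2.2 y hyA y hy rfl, h]
    have hA := ihA hN.1 (fun z hz => (hγ z hz).1) (fun q hq => hC q (by simp [Fm.symsF, hq])) hSA
      (w := w) fun z hz => hw z (by simp [Fm.freeVars, hz])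
    have hB := ihB hN.2.1 (fun z hz => (hγ z hz).2) (fun q hq => hC q (by simp [Fm.symsF, hq]))
      hSB (w := w) fun z hz => hw z (by simp [Fm.freeVars, hz])
    first | exact hA.or hB | exact hA.and hB
  | all x A ih =>
    simp only [Fm.boundVars, List.nodup_cons, List.mem_cons, not_or] at hN hγ
    have hγA : ∀ z ∈ γs, z ∉ A.boundVars := fun z hz => (hγ z hz).2
    have hxγ : x ∉ γs := fun h => (hγ x h).1 rfl
    have hγxA : ∀ z ∈ γs ++ [x], z ∉ A.boundVars := by
      simpa [or_imp, forall_and] using ⟨hγA, hN.1⟩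
    cases b
    · intro h d
      exact ih hN.2 hγxA hC hS (eqOn_assignLast hxγ hw d) (h d)
    · simp only [Fm.skolemFns, ↓reduceIte] at hS
      obtain ⟨hSx, hSA⟩ := I.withSkolem_fns_of_update hS (Fm.skolemFns_eq_none I hN.1)
      intro h
      simp only [Fm.skolemize, ↓reduceIte] at h
      rw [Fm.holds_subst_skTm_skolemize hN.1 hγA, hSx] at h
      have hA := ih hN.2 hγA hC hSA (eqOn_update_witness hxγ hw _) h
      exact fun d => by_contra fun hd => by
        simpa using (skolemWitness_spec hw ⟨d, by simpa using hd⟩).1 hA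
  | ex x A ih =>
    simp only [Fm.boundVars, List.nodup_cons, List.mem_cons, not_or] at hN hγ
    have hγA : ∀ z ∈ γs, z ∉ A.boundVars := fun z hz => (hγ z hz).2
    have hxγ : x ∉ γs := fun h => (hγ x h).1 rfl
    have hγxA : ∀ z ∈ γs ++ [x], z ∉ A.boundVars := by
      simpa [or_imp, forall_and] using ⟨hγA, hN.1⟩
    cases b
    · simp only [Fm.skolemFns, Bool.false_eq_true, ↓reduceIte] at hS
      obtain ⟨hSx, hSA⟩ := I.withSkolem_fns_of_update hS (Fm.skolemFns_eq_none I hN.1)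
      rintro ⟨d, hd⟩
      simp only [Fm.skolemize, Bool.false_eq_true, ↓reduceIte]
      rw [Fm.holds_subst_skTm_skolemize hN.1 hγA, hSx]
      exact ih hN.2 hγA hC hSA (eqOn_update_witness hxγ hw _)
        ((skolemWitness_spec hw ⟨d, by simpa using hd⟩).2 rfl)
    · rintro ⟨d, h⟩
      exact ⟨d, ih hN.2 hγxA hC hS (eqOn_assignLast hxγ hw d) h⟩

end SkolemModel

theorem valid_of_hasC {A : Fm} (hrect : A.rectified) (hbase : A.isBase) {n : ℕ}
    (hC : A.hasC n) : A.valid := by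
  intro D _ I v
  refine Fm.polImp_skolemize_holds_withSkolem (b := true) (γs := []) (ρ := fun _ => v) hrect.1
    (by simp) hbase (fun _ _ h => h) (fun _ _ => rfl) ?_
  rw [Fm.hasC] at hC
  split_ifs at hC
  · exact hC.holds _ v
  · exact Fm.polImp_holds_expandL (b := true) (A.isExistentialoid_skolemize true []) v
      (hC.holds _ v)

/-- **The Löwenheim–Skolem theorem in Herbrand's formulation.**
A first-order formula `A` is valid iff it has Property C of some positive
order `n`. -/
theorem loewenheim_skolem (A : Fm) (hrect : A.rectified) (hbase : A.isBase) :
    A.valid ↔ ∃ n : ℕ, 0 < n ∧ A.hasC n :=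
  ⟨hasC_of_valid hrect, fun ⟨_, _, hC⟩ => valid_of_hasC hrect hbase hC⟩

end Herbrand
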